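/- arXiv:2411.17431 — 3 statements merged into one kernel-verified Lean document; each statement's English description precedes it below -/
import Mathlib

section
/- Let s > 0 be a real number, p a positive integer, and v a real number. Let ε be a random variable uniformly distributed on (-1/2, 1/2), and define the quantized output Q = s · round(clip(v/s + ε, 0, p)), where clip(z, 0, p) = min(max(z, 0), p) and round denotes rounding to the nearest integer (with ties rounded up). Then E[Q] = clip(v, 0, s·p). -/
open Set MeasureTheory

/-!
Rounding commutes with clamping to the integer range `[0, p]`, and for `|ε| < 1/2` the clamped
rounding of `u + ε` agrees with the rounding of `clip(u, 0, p) + ε`. So the expectation reduces to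
`∫_{-1/2}^{1/2} round (c + ε) dε = c`, which holds because the rounding error `x - round x` is
`1`-periodic: its mean over any unit interval equals its mean over `(-1/2, 1/2)`, where it is `x`.
-/

section Round

variable {α : Type*} [Field α] [LinearOrder α] [IsStrictOrderedRing α] [FloorRing α]

lemma monotone_round : Monotone (round : α → ℤ) := fun a b h => by
  simpa only [round_eq] using Int.floor_mono (add_le_add_left h _)

lemma round_le_of_lt_add_half {x : α} {k : ℤ} (h : x < k + 1 / 2) : round x ≤ k := by
  rw [round_eq, ← Int.lt_add_one_iff, Int.floor_lt]
  push_cast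
  linarith

lemma le_round_of_sub_half_le {x : α} {k : ℤ} (h : k - 1 / 2 ≤ x) : k ≤ round x := by
  rw [round_eq, Int.le_floor]
  linarith

end Round

lemma periodic_sub_round : Function.Periodic (fun x : ℝ => x - round x) 1 := fun x => by
  simp only [round_add_one, Int.cast_add, Int.cast_one]
  ring

lemma integral_sub_round_centered : ∫ x in (-(1/2) : ℝ)..(1/2), (x - round x) = 0 := by
  have hround : EqOn (fun x : ℝ => x - round x) id (Ioo (-(1/2)) (1/2)) := fun x hx => by
    simp [round_eq_zero_iff.2 (Ioo_subset_Ico_self hx)]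
  rw [intervalIntegral.integral_of_le (by norm_num), integral_Ioc_eq_integral_Ioo,
    setIntegral_congr_fun measurableSet_Ioo hround, ← integral_Ioc_eq_integral_Ioo,
    ← intervalIntegral.integral_of_le (by norm_num)]
  norm_num [integral_id]

lemma integral_round_add (u : ℝ) : ∫ ε in (-(1/2) : ℝ)..(1/2), (round (u + ε) : ℝ) = u := by
  have hround : IntervalIntegrable (fun ε : ℝ => (round (u + ε) : ℝ)) volume (-(1/2)) (1/2) :=
    Monotone.intervalIntegrable fun a b h =>
      Int.cast_mono (monotone_round (by linarith : u + a ≤ u + b))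
  have herror : ∫ ε in (-(1/2) : ℝ)..(1/2), (u + ε - round (u + ε)) = 0 := by
    rw [intervalIntegral.integral_comp_add_left (fun x => x - (round x : ℝ)),
      show u + 1/2 = u + -(1/2) + 1 by ring,
      periodic_sub_round.intervalIntegral_add_eq (u + -(1/2)) (-(1/2)),
      show (-(1/2) : ℝ) + 1 = 1/2 by norm_num, integral_sub_round_centered]
  have hmean : ∫ ε in (-(1/2) : ℝ)..(1/2), (u + ε) = u := by
    rw [intervalIntegral.integral_comp_add_left (fun x => x), integral_id]
    ring
  rw [intervalIntegral.integral_sub ((continuous_const_add u).intervalIntegrable _ _) hround,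
    hmean] at herror
  linarith

lemma round_clip_add (n : ℕ) (u : ℝ) {ε : ℝ} (hε : ε ∈ Ioo (-(1/2) : ℝ) (1/2)) :
    round (min (max (u + ε) 0) (n : ℝ)) = round (min (max u 0) (n : ℝ) + ε) := by
  obtain ⟨hε₀, hε₁⟩ := hε
  have hn : (0 : ℝ) ≤ n := n.cast_nonneg
  have hround_ε : round ε = 0 := round_eq_zero_iff.2 ⟨hε₀.le, hε₁⟩
  rw [monotone_round.map_min, monotone_round.map_max, round_zero, round_natCast]
  rcases le_total u 0 with hu | hu
  · have : round (u + ε) ≤ 0 := round_le_of_lt_add_half (by push_cast; linarith)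
    rw [max_eq_right hu, min_eq_left hn, zero_add, hround_ε, max_eq_right this,
      min_eq_left (Int.natCast_nonneg n)]
  rcases le_total (n : ℝ) u with hnu | hun
  · have : (n : ℤ) ≤ round (u + ε) := le_round_of_sub_half_le (by push_cast; linarith)
    rw [max_eq_left hu, min_eq_right hnu, round_natCast_add, hround_ε, add_zero,
      max_eq_left ((Int.natCast_nonneg n).trans this), min_eq_right this]
  · have h₀ : 0 ≤ round (u + ε) := le_round_of_sub_half_le (by push_cast; linarith)
    have h₁ : round (u + ε) ≤ n := round_le_of_lt_add_half (by push_cast; linarith)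
    rw [max_eq_left hu, min_eq_left hun, max_eq_left h₀, min_eq_left h₁]

theorem integral_round_clip_add (n : ℕ) (u : ℝ) :
    ∫ ε in Ioo (-(1/2) : ℝ) (1/2), (round (min (max (u + ε) 0) (n : ℝ)) : ℝ) =
      min (max u 0) n := by
  rw [setIntegral_congr_fun measurableSet_Ioo fun ε hε => by rw [round_clip_add n u hε],
    ← integral_Ioc_eq_integral_Ioo, ← intervalIntegral.integral_of_le (by norm_num),
    integral_round_add]

theorem noise_adaptor_expected_mean_general (s : ℝ) (hs : 0 < s) (p : ℕ) (v : ℝ) :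
    (∫ ε in Set.Ioo (-(1/2) : ℝ) (1/2),
      s * (round (min (max (v / s + ε) 0) (p : ℝ)) : ℝ)) =
    min (max v 0) (s * p) := by
  rw [integral_const_mul, integral_round_clip_add, mul_min_of_nonneg _ _ hs.le,
    mul_max_of_nonneg _ _ hs.le, mul_div_cancel₀ v hs.ne', mul_zero]

/-- Noise Adaptor main theorem: the expected value of the stochastic quantizer
`Q = s * round(clip(v/s + ε, 0, p))` with `ε ~ U(-1/2, 1/2)` equals `clip(v, 0, s·p)`. -/
theorem noise_adaptor_expected_mean (s : ℝ) (hs : 0 < s) (p : ℕ) (hp : 0 < p) (v : ℝ) :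
    (∫ ε in Set.Ioo (-(1/2) : ℝ) (1/2),
      s * (round (min (max (v / s + ε) 0) (p : ℝ)) : ℝ)) =
    min (max v 0) (s * p) :=
  noise_adaptor_expected_mean_general s hs p v
end

section
/- Let u be a real number with 0 ≤ u < p (p a positive integer), and let ε be uniformly distributed on (-1/2, 1/2). Then E[round(clip(u + ε, 0, p))] = u, where round is rounding to the nearest integer with ties rounded up. -/
/-!
On the support `[u - 1/2, u + 1/2] ⊆ [-1/2, p + 1/2)` of `u + ε`, clipping to `[0, p]` does not
change the nearest integer, so the clip can be dropped. Since `round x = ⌊x + 1/2⌋`, the expectation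
becomes `∫ x in u..u + 1, ⌊x⌋`, which equals `u`: splitting at the integer `⌊u⌋ + 1`, the floor is
`⌊u⌋` on a piece of length `⌊u⌋ + 1 - u` and `⌊u⌋ + 1` on a piece of length `u - ⌊u⌋`.
-/

open Set MeasureTheory

theorem round_min_max_eq_round {x : ℝ} {a b : ℤ} (hx : x ∈ Ico (a - 1 / 2 : ℝ) (b + 1 / 2)) :
    round (min (max x a) b) = round x := by
  obtain ⟨hax, hxb⟩ := hx
  rcases lt_or_ge x a with hxa | hax'
  · have hab : (a : ℝ) ≤ b := by
      have : a < b + 1 := by exact_mod_cast (by linarith : (a : ℝ) < b + 1)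
      exact_mod_cast Int.lt_add_one_iff.1 this
    rw [max_eq_right hxa.le, min_eq_left hab, round_intCast, eq_comm, round_eq_iff]
    exact ⟨hax, by linarith⟩
  rcases le_or_gt x b with hxb' | hbx
  · rw [max_eq_left hax', min_eq_left hxb']
  · rw [min_eq_right (le_max_of_le_left hbx.le), round_intCast, eq_comm, round_eq_iff]
    exact ⟨by linarith, hxb⟩

theorem integral_floor_self_add_one (u : ℝ) : ∫ x in u..u + 1, (⌊x⌋ : ℝ) = u := by
  set n := ⌊u⌋
  have hn : (n : ℝ) ≤ u := Int.floor_le u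
  have hn' : u < n + 1 := Int.lt_floor_add_one u
  have hmono : Monotone fun x : ℝ => (⌊x⌋ : ℝ) := fun _ _ h => Int.cast_mono (Int.floor_mono h)
  have below : ∫ x in u..n + 1, (⌊x⌋ : ℝ) = ∫ x in u..n + 1, (n : ℝ) :=
    intervalIntegral.integral_congr_Ioo_of_le hn'.le fun x hx => by
      rw [Int.floor_eq_iff.2 ⟨by linarith [hx.1], hx.2⟩]
  have above :
      ∫ x in (n + 1 : ℝ)..u + 1, (⌊x⌋ : ℝ) = ∫ x in (n + 1 : ℝ)..u + 1, ((n + 1 : ℤ) : ℝ) :=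
    intervalIntegral.integral_congr_Ioo_of_le (by linarith) fun x hx => by
      rw [(Int.floor_eq_iff (z := n + 1)).2
        ⟨by push_cast; exact hx.1.le, by push_cast; linarith [hx.2]⟩]
  rw [← intervalIntegral.integral_add_adjacent_intervals (b := n + 1) hmono.intervalIntegrable
    hmono.intervalIntegrable, below, above, intervalIntegral.integral_const,
    intervalIntegral.integral_const, smul_eq_mul, smul_eq_mul]
  push_cast
  ring

theorem integral_round_add_eq_self (u : ℝ) :
    ∫ ε in (-(1 / 2) : ℝ)..1 / 2, (round (u + ε) : ℝ) = u := by
  have hshift (ε : ℝ) : (round (u + ε) : ℝ) = ⌊ε + (u + 1 / 2)⌋ := by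
    rw [round_eq]; congr 2; ring
  simp_rw [hshift]
  rw [intervalIntegral.integral_comp_add_right (fun x => (⌊x⌋ : ℝ))]
  convert integral_floor_self_add_one u using 1
  congr 1 <;> ring

theorem noise_adaptor_interior_unbiased_general (p : ℕ) (u : ℝ)
    (hu0 : 0 ≤ u) (hup : u < p) :
    (∫ ε in Set.Ioo (-(1/2) : ℝ) (1/2),
      (round (min (max (u + ε) 0) (p : ℝ)) : ℝ)) = u := by
  have hclip : EqOn (fun ε => (round (min (max (u + ε) 0) (p : ℝ)) : ℝ))
      (fun ε => (round (u + ε) : ℝ)) (uIcc (-(1 / 2)) (1 / 2)) := fun ε hε => by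
    rw [uIcc_of_le (by norm_num)] at hε
    have h := round_min_max_eq_round (x := u + ε) (a := 0) (b := p)
      ⟨by push_cast; linarith [hε.1], by push_cast; linarith [hε.2]⟩
    push_cast at h
    exact congrArg Int.cast h
  rw [← integral_Ioc_eq_integral_Ioo, ← intervalIntegral.integral_of_le (by norm_num),
    intervalIntegral.integral_congr hclip, integral_round_add_eq_self]

/-- Case 1 of the Noise Adaptor theorem: for `0 ≤ u < p` the noisy rounding is unbiased. -/
theorem noise_adaptor_interior_unbiased (p : ℕ) (hp : 0 < p) (u : ℝ)
    (hu0 : 0 ≤ u) (hup : u < p) :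
    (∫ ε in Set.Ioo (-(1/2) : ℝ) (1/2),
      (round (min (max (u + ε) 0) (p : ℝ)) : ℝ)) = u :=
  noise_adaptor_interior_unbiased_general p u hu0 hup
end

section
/- Consider an integrate-and-fire neuron with threshold th > 0, reset-by-subtraction, constant input current I per time step with 0 ≤ I ≤ th, and initial membrane potential u₀ = th/2. The neuron's membrane updates as u_t = u_{t-1} + I - z_t·th where z_t = 1 if u_{t-1} + I ≥ th and 0 otherwise. Then after T time steps the total spike count N_T = Σ z_t satisfies N_T = ⌊(T·I + th/2)/th⌋ whenever T·I + th/2 < (T+1)·th, and in particular |N_T/T - I/th| ≤ 1/(2T) + 1/T. -/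
/-! The membrane potential never leaves `[0, th)`, and telescoping the reset-by-subtraction
update gives `N_T · th = th/2 + T·I - u_T`. Hence `T·I + th/2` is the integer `N_T` times `th`
plus a remainder in `[0, th)`, which is the floor formula, and the spike count misses `T·I/th`
by at most `|th/2 - u_T| / th ≤ 1/2`. -/

open Finset

theorem Int.floor_div_eq_of_sub_mul_mem_Ico {th x : ℝ} {n : ℤ} (hth : 0 < th)
    (h : x - n * th ∈ Set.Ico 0 th) : ⌊x / th⌋ = n := by
  obtain ⟨h0, h1⟩ := h
  rw [Int.floor_eq_iff, le_div_iff₀ hth, div_lt_iff₀ hth]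
  constructor <;> linarith

theorem abs_div_sub_div_le_of_abs_mul_sub_le {N T I th : ℝ} (hT : 0 < T) (hth : 0 < th)
    (h : |N * th - T * I| ≤ th / 2) : |N / T - I / th| ≤ 1 / (2 * T) := by
  have hrate : N / T - I / th = (N * th - T * I) / (T * th) := by field_simp
  rw [hrate, abs_div, abs_of_pos (mul_pos hT hth), div_le_div_iff₀ (mul_pos hT hth) (by positivity)]
  nlinarith

section IntegrateAndFire

variable {th I : ℝ} {u z : ℕ → ℝ}

theorem membrane_eq_sub_spikes (hu : ∀ t, u (t + 1) = u t + I - z (t + 1) * th) (n : ℕ) :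
    u n = u 0 + n * I - (∑ t ∈ range n, z (t + 1)) * th := by
  induction n with
  | zero => simp
  | succ n ih =>
    rw [sum_range_succ, hu n, ih]
    push_cast
    ring

theorem membrane_mem_Ico (hI0 : 0 ≤ I) (hI1 : I ≤ th)
    (hz : ∀ t, z (t + 1) = if th ≤ u t + I then 1 else 0)
    (hu : ∀ t, u (t + 1) = u t + I - z (t + 1) * th) (h0 : u 0 ∈ Set.Ico 0 th) :
    ∀ t, u t ∈ Set.Ico 0 th := by
  intro t
  induction t with
  | zero => exact h0
  | succ t ih =>
    obtain ⟨hlo, hhi⟩ := ih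
    rw [hu t, hz t]
    split_ifs with hfire
    · constructor <;> linarith
    · constructor <;> linarith

theorem exists_int_sum_spikes_eq (hz : ∀ t, z (t + 1) = if th ≤ u t + I then 1 else 0)
    (n : ℕ) : ∃ N : ℤ, ∑ t ∈ range n, z (t + 1) = N :=
  ⟨∑ t ∈ range n, if th ≤ u t + I then 1 else 0, by push_cast; simp only [hz]⟩

end IntegrateAndFire

/-- Firing-rate behaviour of the reset-by-subtraction integrate-and-fire neuron with
membrane pre-charged to `th/2` and constant sub-threshold input `I`: the spike count
over `T` steps is `⌊(T·I + th/2)/th⌋` (whenever `T·I + th/2 < (T+1)·th`), and the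
firing rate converges to `I/th` with error at most `1/(2T) + 1/T`. -/
theorem if_neuron_spike_count (th I : ℝ) (hth : 0 < th) (hI0 : 0 ≤ I) (hI1 : I ≤ th)
    (u z : ℕ → ℝ)
    (hu0 : u 0 = th / 2)
    (hz : ∀ t : ℕ, z (t + 1) = if th ≤ u t + I then 1 else 0)
    (hu : ∀ t : ℕ, u (t + 1) = u t + I - z (t + 1) * th)
    (T : ℕ) (hT : 0 < T) :
    ((T : ℝ) * I + th / 2 < ((T : ℝ) + 1) * th →
      (∑ t ∈ Finset.range T, z (t + 1)) = (⌊((T : ℝ) * I + th / 2) / th⌋ : ℝ)) ∧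
    |(∑ t ∈ Finset.range T, z (t + 1)) / T - I / th| ≤ 1 / (2 * T) + 1 / T := by
  obtain ⟨N, hN⟩ := exists_int_sum_spikes_eq hz T
  have hcount := membrane_eq_sub_spikes hu T
  obtain ⟨hlo, hhi⟩ := membrane_mem_Ico hI0 hI1 hz hu (by rw [hu0]; constructor <;> linarith) T
  rw [hN, hu0] at hcount
  rw [hN]
  refine ⟨fun _ => ?_, ?_⟩
  · rw [Int.floor_div_eq_of_sub_mul_mem_Ico hth]
    constructor <;> linarith
  · have hTpos : (0 : ℝ) < T := by exact_mod_cast hT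
    have hrate := abs_div_sub_div_le_of_abs_mul_sub_le hTpos hth
      (abs_le.mpr ⟨by linarith, by linarith⟩ : |(N : ℝ) * th - T * I| ≤ th / 2)
    linarith [one_div_pos.mpr hTpos]
end
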